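/- For uniform all-to-all traffic on wavelength λ, conditioned on ℓ destinations on λ, the maximum critical-segment utilization probability satisfies 1/2 - (1/(2N))·E_α^ℓ(|CLG_λ|) ≤ P_α^ℓ(segment λ used on λ) ≤ 1/2 - (1/(2N))·E_α^ℓ(|CLG_λ|) + (Λ-1)/(2N). -/

import Mathlib

noncomputable section

/-- The node reached from `x` by moving `d` segments clockwise on an `N`-node ring. -/
def wrap {N : ℕ} (x : Fin N) (d : ℕ) : Fin N := ⟨(x.1 + d) % N, Nat.mod_lt _ x.pos⟩

/-- The clockwise gap at node `x` with respect to the active set `A`: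
the distance from `x` to the next active node clockwise. -/
def gapLen {N : ℕ} (A : Finset (Fin N)) (x : Fin N) : ℕ :=
  sInf {d : ℕ | 0 < d ∧ wrap x d ∈ A}

/-- The length of the largest gap of the active set `A`. -/
def maxGap {N : ℕ} (A : Finset (Fin N)) : ℕ := A.sup (gapLen A)

/-- The set of active nodes at which a gap of maximal length starts (clockwise). -/
def maxSet {N : ℕ} (A : Finset (Fin N)) : Finset (Fin N) :=
  A.filter (fun x => gapLen A x = maxGap A)

/-- Clockwise hop distance from `a` to `b`. -/
def dCw {N : ℕ} (a b : Fin N) : ℕ := (b.1 + N - a.1) % N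

/-- Probability (over the uniform tie-break among maximal gaps) that the chosen
largest gap of active set `A` starts (clockwise) at node `g`. -/
def clgStartProb {N : ℕ} (A : Finset (Fin N)) (g : Fin N) : ℚ :=
  if g ∈ maxSet A then 1 / ((maxSet A).card : ℚ) else 0

/-- Probability (over the uniform tie-break among maximal gaps) that the clockwise
segment entering node `m` is traversed under shortest-path routing, when the
active set is `A` and the sender is `S`: the clockwise copy travels from `S` to the
start of the chosen largest gap. -/
def segUseProb {N : ℕ} (A : Finset (Fin N)) (S m : Fin N) : ℚ :=
  (((maxSet A).filter (fun g => 1 ≤ dCw S m ∧ dCw S m ≤ dCw S g)).card : ℚ) /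
    ((maxSet A).card : ℚ)

/-- The nodes of an `N`-node ring homed on wavelength `lam` (out of `Λ` wavelengths):
those whose index is congruent to `lam` modulo `Λ`. -/
def homed (N Λ lam : ℕ) : Finset (Fin N) :=
  Finset.univ.filter (fun i => i.1 % Λ = lam % Λ)

end


namespace S15

open Fin.NatCast Fin.CommRing

variable {n : ℕ}

lemma mod_helper {m a r : ℕ} (hr : r < m) (h : a = r ∨ a = m + r) : a % m = r := by
  rcases h with rfl | rfl
  · exact Nat.mod_eq_of_lt hr
  · rw [Nat.add_mod_left, Nat.mod_eq_of_lt hr]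

lemma natCast_val (d : ℕ) : ((d : Fin (n+1))).val = d % (n+1) := Fin.val_natCast d (n+1)

lemma wrap_eq (x : Fin (n+1)) (d : ℕ) : wrap x d = x + (d : Fin (n+1)) := by
  apply Fin.ext
  rw [Fin.val_add, natCast_val]
  show (x.1 + d) % (n+1) = _
  conv_lhs => rw [Nat.add_mod]
  conv_rhs => rw [Nat.add_mod]
  rw [Nat.mod_mod_of_dvd]
  exact dvd_refl _

lemma dCw_eq (a b : Fin (n+1)) : dCw a b = (b - a).val := by
  rw [Fin.sub_def]
  show (b.1 + (n+1) - a.1) % (n+1) = _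
  congr 1
  omega

lemma cast_val (z : Fin (n+1)) : ((z.val : ℕ) : Fin (n+1)) = z := Fin.cast_val_eq_self z

lemma add_dCw (x y : Fin (n+1)) : x + ((dCw x y : ℕ) : Fin (n+1)) = y := by
  rw [dCw_eq, cast_val]; ring

lemma dCw_lt (a b : Fin (n+1)) : dCw a b < n+1 := by rw [dCw_eq]; exact (b - a).is_lt

lemma dCw_pos {a b : Fin (n+1)} (h : b ≠ a) : 0 < dCw a b := by
  rw [dCw_eq]
  exact Nat.pos_of_ne_zero (fun hz => h (by
    have : b - a = 0 := Fin.ext (by simpa using hz)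
    have := sub_eq_zero.mp this
    exact this))

lemma dCw_self (a : Fin (n+1)) : dCw a a = 0 := by
  rw [dCw_eq, sub_self]; rfl

lemma dCw_add_cancel (a b c : Fin (n+1)) : dCw (a+c) (b+c) = dCw a b := by
  rw [dCw_eq, dCw_eq]; congr 1; ring

lemma sub_natCast_val {z : Fin (n+1)} {L : ℕ} (h1 : L ≤ z.val) :
    (z - (L : Fin (n+1))).val = z.val - L := by
  have hL : L < n + 1 := lt_of_le_of_lt h1 z.is_lt
  rw [Fin.sub_def]
  show (n + 1 - ((L : Fin (n+1)).val) + z.val) % (n+1) = z.val - L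
  rw [natCast_val, Nat.mod_eq_of_lt hL]
  apply mod_helper (by omega) (Or.inr (by omega))

lemma dCw_anticomm {a b : Fin (n+1)} (h : a ≠ b) : dCw a b + dCw b a = n+1 := by
  rw [dCw_eq, dCw_eq]
  have h1 : b - a ≠ 0 := sub_ne_zero.mpr (Ne.symm h)
  have h2 : a - b = -(b - a) := by ring
  rw [h2]
  have h3 : (-(b-a)).val = (n + 1 - (b-a).val) % (n+1) := by
    rw [Fin.neg_def]
  rw [h3]
  have h4 : 0 < (b - a).val := Nat.pos_of_ne_zero (fun hz => h1 (Fin.ext (by simpa using hz)))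
  have h5 : (b - a).val < n+1 := (b-a).is_lt
  rw [Nat.mod_eq_of_lt (by omega)]
  omega

lemma neg_natCast_val {L : ℕ} (h0 : 0 < L) (h1 : L < n+1) :
    ((-(L : Fin (n+1))).val) = n+1 - L := by
  rw [Fin.neg_def]
  show ((n+1) - (L : Fin (n+1)).val) % (n+1) = n+1 - L
  rw [natCast_val, Nat.mod_eq_of_lt h1, Nat.mod_eq_of_lt (by omega)]

section Gap
variable {A : Finset (Fin (n+1))} {x y S g : Fin (n+1)}

lemma gapLen_def (A : Finset (Fin (n+1))) (x : Fin (n+1)) :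
    gapLen A x = sInf {d : ℕ | 0 < d ∧ x + (d : Fin (n+1)) ∈ A} := by
  unfold gapLen; congr 1; ext d; simp only [Set.mem_setOf_eq, wrap_eq]

lemma top_mem (hx : x ∈ A) : (n+1) ∈ {d : ℕ | 0 < d ∧ x + (d:Fin (n+1)) ∈ A} :=
  ⟨Nat.succ_pos n, by rw [Fin.natCast_self]; simpa using hx⟩

lemma gapLen_pos (hx : x ∈ A) : 0 < gapLen A x := by
  rw [gapLen_def]; exact (Nat.sInf_mem ⟨_, top_mem hx⟩).1

lemma gapLen_le (hx : x ∈ A) : gapLen A x ≤ n+1 := by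
  rw [gapLen_def]; exact Nat.sInf_le (top_mem hx)

lemma nxt_mem (hx : x ∈ A) : x + ((gapLen A x : ℕ) : Fin (n+1)) ∈ A := by
  rw [gapLen_def]; exact (Nat.sInf_mem ⟨_, top_mem hx⟩).2

lemma gapLen_le_dCw (hy : y ∈ A) (h : y ≠ x) : gapLen A x ≤ dCw x y := by
  rw [gapLen_def]; exact Nat.sInf_le ⟨dCw_pos h, by rw [add_dCw]; exact hy⟩

lemma not_mem_interior (hx : x ∈ A) {d : ℕ} (h0 : 0 < d) (hd : d < gapLen A x) :
    x + (d : Fin (n+1)) ∉ A := by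
  intro hmem
  have : gapLen A x ≤ d := by rw [gapLen_def]; exact Nat.sInf_le ⟨h0, hmem⟩
  omega

/-- next active node clockwise -/
noncomputable def nxt (A : Finset (Fin (n+1))) (x : Fin (n+1)) : Fin (n+1) :=
  x + ((gapLen A x : ℕ) : Fin (n+1))

lemma nxt_mem' (hx : x ∈ A) : nxt A x ∈ A := nxt_mem hx

lemma nxt_injOn (A : Finset (Fin (n+1))) : Set.InjOn (nxt A) A := by
  intro x₁ h₁ x₂ h₂ heq
  by_contra hne
  wlog hle : gapLen A x₁ ≤ gapLen A x₂ generalizing x₁ x₂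
  · exact this h₂ h₁ heq.symm (Ne.symm hne) (le_of_not_ge hle)
  have h1 : 0 < gapLen A x₁ := gapLen_pos h₁
  have hlt : gapLen A x₁ < gapLen A x₂ := by
    rcases lt_or_eq_of_le hle with h | h
    · exact h
    · exfalso; apply hne
      unfold nxt at heq; rw [h] at heq; exact add_right_cancel heq
  have hx1 : x₁ = x₂ + (((gapLen A x₂ - gapLen A x₁ : ℕ)) : Fin (n+1)) := by
    rw [Nat.cast_sub (le_of_lt hlt)]
    unfold nxt at heq
    linear_combination heq
  exact not_mem_interior h₂ (by omega) (by omega) (hx1 ▸ h₁)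

/-- counter-clockwise gap length -/
noncomputable def gapLenB (A : Finset (Fin (n+1))) (y : Fin (n+1)) : ℕ :=
  sInf {d : ℕ | 0 < d ∧ y - (d : Fin (n+1)) ∈ A}

lemma gapLenB_nxt (hx : x ∈ A) : gapLenB A (nxt A x) = gapLen A x := by
  unfold gapLenB
  have hmemL : gapLen A x ∈ {d : ℕ | 0 < d ∧ nxt A x - (d : Fin (n+1)) ∈ A} := by
    refine ⟨gapLen_pos hx, ?_⟩
    show nxt A x - ((gapLen A x : ℕ) : Fin (n+1)) ∈ A
    unfold nxt; simpa using hx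
  apply le_antisymm (Nat.sInf_le hmemL)
  by_contra hlt
  push_neg at hlt
  obtain ⟨hd0, hdmem⟩ := Nat.sInf_mem (⟨_, hmemL⟩ : Set.Nonempty _)
  have h1 : nxt A x - ((sInf {d : ℕ | 0 < d ∧ nxt A x - (d : Fin (n+1)) ∈ A} : ℕ) : Fin (n+1))
      = x + ((gapLen A x - sInf {d : ℕ | 0 < d ∧ nxt A x - (d : Fin (n+1)) ∈ A} : ℕ) : Fin (n+1)) := by
    rw [Nat.cast_sub (le_of_lt hlt)]; unfold nxt; ring
  rw [h1] at hdmem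
  exact not_mem_interior hx (by omega) (by omega) hdmem

lemma nxt_image (A : Finset (Fin (n+1))) : A.image (nxt A) = A := by
  have hsub : A.image (nxt A) ⊆ A := by
    intro y hy
    obtain ⟨x, hx, rfl⟩ := Finset.mem_image.mp hy
    exact nxt_mem' hx
  have hcard : A.card ≤ (A.image (nxt A)).card :=
    (Finset.card_image_of_injOn (nxt_injOn A)).ge
  exact Finset.eq_of_subset_of_card_le hsub hcard

lemma supB (A : Finset (Fin (n+1))) : A.sup (gapLenB A) = maxGap A := by
  unfold maxGap
  calc A.sup (gapLenB A) = (A.image (nxt A)).sup (gapLenB A) := by rw [nxt_image]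
    _ = A.sup (gapLenB A ∘ nxt A) := Finset.sup_image A (nxt A) (gapLenB A)
    _ = A.sup (gapLen A) := Finset.sup_congr rfl fun x hx => gapLenB_nxt hx

/-- ccw max-gap end set -/
noncomputable def maxSetB (A : Finset (Fin (n+1))) : Finset (Fin (n+1)) :=
  A.filter (fun y => gapLenB A y = maxGap A)

lemma maxSet_subset : maxSet A ⊆ A := Finset.filter_subset _ _

lemma gapLen_of_maxSet (hg : g ∈ maxSet A) : gapLen A g = maxGap A :=
  (Finset.mem_filter.mp hg).2

lemma maxSetB_eq (A : Finset (Fin (n+1))) : maxSetB A = (maxSet A).image (nxt A) := by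
  ext y
  simp only [maxSetB, maxSet, Finset.mem_filter, Finset.mem_image]
  constructor
  · rintro ⟨hy, hgap⟩
    obtain ⟨x, hx, rfl⟩ := Finset.mem_image.mp ((nxt_image A).symm ▸ hy)
    exact ⟨x, ⟨hx, by rw [← gapLenB_nxt hx]; exact hgap⟩, rfl⟩
  · rintro ⟨x, ⟨hx, hmax⟩, rfl⟩
    exact ⟨nxt_mem hx, by rw [gapLenB_nxt hx, hmax]⟩

lemma maxSetB_card (A : Finset (Fin (n+1))) : (maxSetB A).card = (maxSet A).card := by
  rw [maxSetB_eq]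
  exact Finset.card_image_of_injOn ((nxt_injOn A).mono (fun x hx => maxSet_subset hx))

lemma maxSet_nonempty (hA : A.Nonempty) : (maxSet A).Nonempty := by
  obtain ⟨x, hx, hsup⟩ := Finset.exists_mem_eq_sup A hA (gapLen A)
  exact ⟨x, Finset.mem_filter.mpr ⟨hx, hsup.symm⟩⟩

lemma maxGap_pos (hA : A.Nonempty) : 0 < maxGap A := by
  obtain ⟨x, hx⟩ := hA
  exact lt_of_lt_of_le (gapLen_pos hx) (Finset.le_sup hx)

lemma maxGap_le (hA : A.Nonempty) : maxGap A ≤ n+1 := by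
  obtain ⟨g, hg⟩ := maxSet_nonempty hA
  rw [← gapLen_of_maxSet hg]
  exact gapLen_le (maxSet_subset hg)

lemma dCw_sum (hS : S ∈ A) (hg : g ∈ maxSet A) :
    dCw S g + dCw (nxt A g) S = (n+1) - maxGap A := by
  have hgA := maxSet_subset hg
  have hL := gapLen_of_maxSet hg
  by_cases hSg : S = g
  · subst hSg
    rw [dCw_self]
    by_cases hLN : gapLen A S = n+1
    · have hnxt : nxt A S = S := by
        unfold nxt; rw [hLN, Fin.natCast_self, add_zero]
      rw [hnxt, dCw_self]; omega
    · have hL1 : 1 ≤ gapLen A S := gapLen_pos hgA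
      have hLlt : gapLen A S < n+1 := lt_of_le_of_ne (gapLen_le hgA) hLN
      have hd : dCw (nxt A S) S = (n+1) - gapLen A S := by
        rw [dCw_eq]
        have h2 : S - (nxt A S) = -((gapLen A S : ℕ) : Fin (n+1)) := by
          unfold nxt; ring
        rw [h2, neg_natCast_val hL1 hLlt]
      omega
  · have he1 : 1 ≤ dCw g S := dCw_pos hSg
    have heL : gapLen A g ≤ dCw g S := gapLen_le_dCw hS hSg
    have hanti : dCw S g + dCw g S = n+1 := dCw_anticomm hSg
    have hlt : dCw g S < n+1 := dCw_lt _ _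
    have hd' : dCw (nxt A g) S = dCw g S - gapLen A g := by
      rw [dCw_eq]
      have h2 : S - (nxt A g) = (S - g) - ((gapLen A g : ℕ) : Fin (n+1)) := by
        unfold nxt; ring
      rw [h2, sub_natCast_val (by rw [← dCw_eq g S]; exact heL), ← dCw_eq g S]
    omega

end Gap

section Count

/-- number of `d ∈ [1, D]` with `d % Λ = r` -/
def cNat (Λ r D : ℕ) : ℕ := ((Finset.Icc 1 D).filter (fun d => d % Λ = r)).card

lemma cNat_zero (Λ r : ℕ) : cNat Λ r 0 = 0 := by simp [cNat]

lemma cNat_step {Λ r D : ℕ} (hΛ : 0 < Λ) (hΛD : Λ ≤ D) (hD : D % Λ = r) :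
    cNat Λ r D = cNat Λ r (D - Λ) + 1 := by
  have hsplit : Finset.Icc 1 D = Finset.Icc 1 (D - Λ) ∪ Finset.Icc (D - Λ + 1) D := by
    ext d; simp only [Finset.mem_Icc, Finset.mem_union]; omega
  have hdisj : Disjoint ((Finset.Icc 1 (D - Λ)).filter (fun d => d % Λ = r))
      ((Finset.Icc (D - Λ + 1) D).filter (fun d => d % Λ = r)) := by
    apply Finset.disjoint_filter_filter
    rw [Finset.disjoint_left]
    intro d hd1 hd2
    simp only [Finset.mem_Icc] at hd1 hd2
    omega
  have hsingle : (Finset.Icc (D - Λ + 1) D).filter (fun d => d % Λ = r) = {D} := by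
    ext d
    simp only [Finset.mem_filter, Finset.mem_Icc, Finset.mem_singleton]
    constructor
    · rintro ⟨⟨h1, h2⟩, h3⟩
      have hmod : d % Λ = D % Λ := h3.trans hD.symm
      have hdvd : Λ ∣ D - d := (Nat.modEq_iff_dvd' h2).mp hmod
      have := Nat.eq_zero_of_dvd_of_lt hdvd
      omega
    · rintro rfl
      exact ⟨⟨by omega, le_refl _⟩, hD⟩
  unfold cNat
  rw [hsplit, Finset.filter_union, Finset.card_union_of_disjoint hdisj, hsingle,
    Finset.card_singleton]

lemma cNat_base {Λ r : ℕ} (h0 : 0 < r) (hr : r < Λ) : cNat Λ r r = 1 := by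
  unfold cNat
  have : (Finset.Icc 1 r).filter (fun d => d % Λ = r) = {r} := by
    ext d
    simp only [Finset.mem_filter, Finset.mem_Icc, Finset.mem_singleton]
    constructor
    · rintro ⟨⟨h1, h2⟩, h3⟩
      rw [Nat.mod_eq_of_lt (lt_of_le_of_lt h2 hr)] at h3
      exact h3
    · rintro rfl
      exact ⟨⟨h0, le_refl _⟩, Nat.mod_eq_of_lt hr⟩
  rw [this, Finset.card_singleton]

lemma cNat_exact {Λ r : ℕ} (hΛ : 0 < Λ) (hr : r < Λ) :
    ∀ D, D % Λ = r → Λ * cNat Λ r D = D + (if r = 0 then 0 else Λ - r) := by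
  intro D
  induction D using Nat.strong_induction_on with
  | _ D ih =>
    intro hD
    by_cases hbig : Λ ≤ D
    · have hstep := cNat_step hΛ hbig hD
      have hmod : (D - Λ) % Λ = r := by
        have : (D - Λ + Λ) % Λ = (D - Λ) % Λ := Nat.add_mod_right _ _
        rw [← this, Nat.sub_add_cancel hbig, hD]
      have hih := ih (D - Λ) (by omega) hmod
      rw [hstep, Nat.mul_add, Nat.mul_one, hih]
      split_ifs <;> omega
    · push_neg at hbig
      have hDr : D = r := by rw [← hD, Nat.mod_eq_of_lt hbig]
      subst hDr
      by_cases h0 : D = 0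
      · subst h0
        rw [cNat_zero]
        simp
      · rw [cNat_base (Nat.pos_of_ne_zero h0) hbig, if_neg h0]
        omega

lemma count_bound {Λ r rb D D' : ℕ} (hΛ : 0 < Λ) (hr : r < Λ) (hrb : rb < Λ)
    (hsum : (r + rb) % Λ = 0)
    (hD : D % Λ = r ∨ D = 0) (hD' : D' % Λ = rb ∨ D' = 0) :
    D + D' ≤ Λ * (cNat Λ r D + cNat Λ rb D') ∧
      Λ * (cNat Λ r D + cNat Λ rb D') ≤ D + D' + (if r = 0 then 0 else Λ) := by
  have hrr : (r = 0 ∧ rb = 0) ∨ (0 < r ∧ 0 < rb ∧ r + rb = Λ) := by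
    rcases Nat.eq_zero_or_pos r with h | h
    · subst h
      simp only [Nat.zero_add] at hsum
      rw [Nat.mod_eq_of_lt hrb] at hsum
      exact Or.inl ⟨rfl, hsum⟩
    · right
      have hrb0 : 0 < rb := by
        rcases Nat.eq_zero_or_pos rb with h2 | h2
        · subst h2
          rw [Nat.add_zero, Nat.mod_eq_of_lt hr] at hsum
          omega
        · exact h2
      have hdvd : Λ ∣ r + rb := Nat.dvd_of_mod_eq_zero hsum
      have hle : Λ ≤ r + rb := Nat.le_of_dvd (by omega) hdvd
      have hdvd2 : Λ ∣ r + rb - Λ := Nat.dvd_sub hdvd (dvd_refl Λ)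
      have := Nat.eq_zero_of_dvd_of_lt hdvd2
      exact ⟨h, hrb0, by omega⟩
  have eD : Λ * cNat Λ r D = D + (if r = 0 then 0 else Λ - r) ∨
      (D = 0 ∧ Λ * cNat Λ r D = 0) := by
    rcases hD with h | h
    · exact Or.inl (cNat_exact hΛ hr D h)
    · exact Or.inr ⟨h, by rw [h, cNat_zero, Nat.mul_zero]⟩
  have eD' : Λ * cNat Λ rb D' = D' + (if rb = 0 then 0 else Λ - rb) ∨
      (D' = 0 ∧ Λ * cNat Λ rb D' = 0) := by
    rcases hD' with h | h
    · exact Or.inl (cNat_exact hΛ hrb D' h)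
    · exact Or.inr ⟨h, by rw [h, cNat_zero, Nat.mul_zero]⟩
  rw [Nat.mul_add]
  rcases hrr with ⟨hr0, hrb0⟩ | ⟨hr0, hrb0, hrrb⟩
  · subst hr0; subst hrb0
    rw [if_pos rfl] at eD ⊢
    rw [if_pos rfl] at eD'
    rcases eD with h1 | ⟨h1a, h1b⟩ <;> rcases eD' with h2 | ⟨h2a, h2b⟩ <;> omega
  · rw [if_neg (by omega : ¬ r = 0)] at eD ⊢
    rw [if_neg (by omega : ¬ rb = 0)] at eD'
    rcases eD with h1 | ⟨h1a, h1b⟩ <;> rcases eD' with h2 | ⟨h2a, h2b⟩ <;> omega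

end Count

section Rho
variable {Λ : ℕ} [NeZero Λ]

/-- residue of a ring node mod `Λ` -/
def rho (Λ : ℕ) (x : Fin (n+1)) : ZMod Λ := (x.val : ZMod Λ)

lemma cast_mod_dvd (hdvd : Λ ∣ (n+1)) (a : ℕ) : ((a % (n+1) : ℕ) : ZMod Λ) = (a : ZMod Λ) := by
  conv_rhs => rw [← Nat.div_add_mod a (n+1)]
  rw [Nat.cast_add, Nat.cast_mul, (ZMod.natCast_eq_zero_iff (n+1) Λ).mpr hdvd,
    zero_mul, zero_add]

lemma rho_natCast (hdvd : Λ ∣ (n+1)) (t : ℕ) :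
    rho Λ ((t : ℕ) : Fin (n+1)) = (t : ZMod Λ) := by
  unfold rho
  rw [natCast_val, cast_mod_dvd hdvd]

lemma rho_add (hdvd : Λ ∣ (n+1)) (a b : Fin (n+1)) :
    rho Λ (a + b) = rho Λ a + rho Λ b := by
  unfold rho
  rw [Fin.val_add, cast_mod_dvd hdvd]
  push_cast
  ring

lemma rho_sub (hdvd : Λ ∣ (n+1)) (a b : Fin (n+1)) :
    rho Λ (a - b) = rho Λ a - rho Λ b := by
  have h := rho_add hdvd (a - b) b
  rw [sub_add_cancel] at h
  rw [h]
  ring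

lemma val_modL (x : Fin (n+1)) : x.val % Λ = (rho Λ x).val := (ZMod.val_natCast _ _).symm

lemma dCw_modL (hdvd : Λ ∣ (n+1)) (a b : Fin (n+1)) :
    dCw a b % Λ = (rho Λ b - rho Λ a).val := by
  rw [dCw_eq, val_modL, rho_sub hdvd]

lemma homed_iff (hdvd : Λ ∣ (n+1)) (lam : ℕ) (i : Fin (n+1)) :
    i ∈ homed (n+1) Λ lam ↔ rho Λ i = rho Λ ((lam : ℕ) : Fin (n+1)) := by
  unfold homed
  rw [Finset.mem_filter]
  simp only [Finset.mem_univ, true_and]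
  rw [rho_natCast hdvd]
  constructor
  · intro h
    apply ZMod.val_injective
    rw [← val_modL, h, ZMod.val_natCast]
  · intro h
    have := congrArg ZMod.val h
    rw [← val_modL, ZMod.val_natCast] at this
    exact this

end Rho

section ResCount
variable {Λ η : ℕ}

lemma card_range_mod (hΛ : 0 < Λ) {r : ℕ} (hr : r < Λ) (η : ℕ) :
    ((Finset.range (η*Λ)).filter (fun d => d % Λ = r)).card = η := by
  induction η with
  | zero => simp
  | succ η ih =>
    have hmul : (η+1)*Λ = η*Λ + Λ := by ring
    have hsplit : Finset.range ((η+1)*Λ) = Finset.range (η*Λ) ∪ Finset.Ico (η*Λ) ((η+1)*Λ) := by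
      ext d
      simp only [Finset.mem_range, Finset.mem_union, Finset.mem_Ico]
      omega
    have hdisj : Disjoint ((Finset.range (η*Λ)).filter (fun d => d % Λ = r))
        ((Finset.Ico (η*Λ) ((η+1)*Λ)).filter (fun d => d % Λ = r)) := by
      apply Finset.disjoint_filter_filter
      rw [Finset.disjoint_left]
      intro d hd1 hd2
      simp only [Finset.mem_range] at hd1
      simp only [Finset.mem_Ico] at hd2
      omega
    have hsingle : (Finset.Ico (η*Λ) ((η+1)*Λ)).filter (fun d => d % Λ = r) = {η*Λ + r} := by
      ext d
      simp only [Finset.mem_filter, Finset.mem_Ico, Finset.mem_singleton]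
      constructor
      · rintro ⟨⟨h1, h2⟩, h3⟩
        have hx : d = (d - η*Λ) + η*Λ := by omega
        rw [hx, Nat.add_mul_mod_self_right] at h3
        rw [Nat.mod_eq_of_lt (by omega)] at h3
        omega
      · rintro rfl
        refine ⟨⟨by omega, by omega⟩, ?_⟩
        rw [Nat.add_comm, Nat.add_mul_mod_self_right, Nat.mod_eq_of_lt hr]
    rw [hsplit, Finset.filter_union, Finset.card_union_of_disjoint hdisj, hsingle,
      Finset.card_singleton, ih]

lemma card_fin_filter (Q : ℕ → Prop) [DecidablePred Q] :
    (Finset.univ.filter (fun i : Fin (n+1) => Q i.val)).card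
      = ((Finset.range (n+1)).filter Q).card := by
  apply Finset.card_nbij (fun i => i.val)
  · intro i hi
    simp only [Finset.mem_coe, Finset.mem_filter, Finset.mem_univ, true_and] at hi
    simp only [Finset.mem_coe, Finset.mem_filter, Finset.mem_range]
    exact ⟨i.is_lt, hi⟩
  · exact Fin.val_injective.injOn
  · intro d hd
    simp only [Finset.coe_filter, Finset.mem_range, Set.mem_setOf_eq] at hd
    exact ⟨⟨d, hd.1⟩, by simp [hd.2], rfl⟩

lemma homed_card (hN : n + 1 = η * Λ) (hΛ : 0 < Λ) (lam : ℕ) (hlam : 1 ≤ lam) :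
    (homed (n+1) Λ lam).card = η := by
  unfold homed
  rw [card_fin_filter (fun d => d % Λ = lam % Λ), hN]
  exact card_range_mod hΛ (Nat.mod_lt lam hΛ) η

end ResCount

lemma val_add_nat (x : Fin (n+1)) (t : ℕ) :
    (x + (t : Fin (n+1))).val = (x.val + t) % (n+1) := by
  rw [← wrap_eq]; rfl

lemma dCw_add_nat (S m : Fin (n+1)) (t : ℕ) :
    dCw S (m + (t : Fin (n+1))) = (dCw S m + t) % (n+1) := by
  have h : m + (t : Fin (n+1)) - S = (m - S) + (t : Fin (n+1)) := by ring
  rw [dCw_eq, h, val_add_nat, dCw_eq]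

section Cnt
variable {Λ η : ℕ}

lemma cnt_eq (hN : n + 1 = η * Λ) (hΛ : 0 < Λ) (S m0 : Fin (n+1)) {D : ℕ} (hD : D < n+1) :
    ((Finset.range η).filter (fun k => 1 ≤ dCw S (m0 + ((k*Λ : ℕ) : Fin (n+1))) ∧
        dCw S (m0 + ((k*Λ : ℕ) : Fin (n+1))) ≤ D)).card
      = cNat Λ (dCw S m0 % Λ) D := by
  have hdvd : Λ ∣ (n+1) := ⟨η, by rw [hN]; ring⟩
  set a := dCw S m0 with ha
  set f : ℕ → ℕ := fun k => dCw S (m0 + ((k*Λ : ℕ) : Fin (n+1))) with hfdef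
  have hf : ∀ k, f k = (a + k*Λ) % (n+1) := fun k => dCw_add_nat S m0 (k*Λ)
  have hinj : Set.InjOn f (Finset.range η) := by
    intro k₁ hk₁ k₂ hk₂ heq
    simp only [Finset.coe_range, Set.mem_Iio] at hk₁ hk₂
    rw [hf, hf] at heq
    have hmod : a + k₁*Λ ≡ a + k₂*Λ [MOD n+1] := heq
    have hmod2 : k₁*Λ ≡ k₂*Λ [MOD n+1] := Nat.ModEq.add_left_cancel' a hmod
    rcases le_total k₁ k₂ with hle | hle
    · have hdvd2 : (n+1) ∣ k₂*Λ - k₁*Λ :=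
        (Nat.modEq_iff_dvd' (Nat.mul_le_mul_right Λ hle)).mp hmod2
      rw [← Nat.sub_mul, hN] at hdvd2
      obtain ⟨c, hc⟩ := hdvd2
      have hc2 : k₂ - k₁ = η * c := by
        apply Nat.eq_of_mul_eq_mul_right hΛ
        rw [hc]; ring
      rcases Nat.eq_zero_or_pos c with rfl | hcpos
      · omega
      · have : η * 1 ≤ η * c := Nat.mul_le_mul_left η hcpos
        omega
    · have hdvd2 : (n+1) ∣ k₁*Λ - k₂*Λ :=
        (Nat.modEq_iff_dvd' (Nat.mul_le_mul_right Λ hle)).mp hmod2.symm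
      rw [← Nat.sub_mul, hN] at hdvd2
      obtain ⟨c, hc⟩ := hdvd2
      have hc2 : k₁ - k₂ = η * c := by
        apply Nat.eq_of_mul_eq_mul_right hΛ
        rw [hc]; ring
      rcases Nat.eq_zero_or_pos c with rfl | hcpos
      · omega
      · have : η * 1 ≤ η * c := Nat.mul_le_mul_left η hcpos
        omega
  have himage : (Finset.range η).image f = (Finset.range (n+1)).filter (fun d => d % Λ = a % Λ) := by
    apply Finset.eq_of_subset_of_card_le
    · intro d hd
      obtain ⟨k, hk, rfl⟩ := Finset.mem_image.mp hd
      rw [Finset.mem_filter, Finset.mem_range]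
      refine ⟨by rw [hf]; exact Nat.mod_lt _ (Nat.succ_pos n), ?_⟩
      rw [hf, Nat.mod_mod_of_dvd _ hdvd, Nat.add_mul_mod_self_right]
    · rw [Finset.card_image_of_injOn hinj, Finset.card_range]
      have := card_range_mod hΛ (Nat.mod_lt a hΛ) η
      rw [← hN] at this
      rw [this]
  have hstep1 : ((Finset.range η).filter (fun k => 1 ≤ f k ∧ f k ≤ D)).card
      = (((Finset.range η).image f).filter (fun d => 1 ≤ d ∧ d ≤ D)).card := by
    rw [Finset.filter_image]
    rw [Finset.card_image_of_injOn (hinj.mono (Finset.filter_subset _ _))]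
  show ((Finset.range η).filter (fun k => 1 ≤ f k ∧ f k ≤ D)).card = _
  rw [hstep1, himage, Finset.filter_filter]
  unfold cNat
  congr 1
  ext d
  simp only [Finset.mem_filter, Finset.mem_range, Finset.mem_Icc]
  constructor
  · rintro ⟨h1, h2, h3, h4⟩
    exact ⟨⟨h3, h4⟩, h2⟩
  · rintro ⟨⟨h1, h2⟩, h3⟩
    exact ⟨by omega, h3, h1, h2⟩

lemma config_bound (hN : n + 1 = η * Λ) (hΛ : 0 < Λ) {lam : ℕ} {A : Finset (Fin (n+1))}
    {S : Fin (n+1)} (hS : S ∈ A) (hsub : ∀ a ∈ A, a = S ∨ a ∈ homed (n+1) Λ lam)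
    {g : Fin (n+1)} (hg : g ∈ maxSet A) :
    (n+1) - maxGap A ≤ Λ * (cNat Λ (dCw S ((lam : ℕ) : Fin (n+1)) % Λ) (dCw S g)
        + cNat Λ (dCw ((lam : ℕ) : Fin (n+1)) S % Λ) (dCw (nxt A g) S)) ∧
    Λ * (cNat Λ (dCw S ((lam : ℕ) : Fin (n+1)) % Λ) (dCw S g)
        + cNat Λ (dCw ((lam : ℕ) : Fin (n+1)) S % Λ) (dCw (nxt A g) S))
      ≤ (n+1) - maxGap A + (if dCw S ((lam : ℕ) : Fin (n+1)) % Λ = 0 then 0 else Λ) := by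
  haveI : NeZero Λ := ⟨hΛ.ne'⟩
  have hdvd : Λ ∣ (n+1) := ⟨η, by rw [hN]; ring⟩
  set c0 : Fin (n+1) := ((lam : ℕ) : Fin (n+1)) with hc0
  have hr : dCw S c0 % Λ < Λ := Nat.mod_lt _ hΛ
  have hrb : dCw c0 S % Λ < Λ := Nat.mod_lt _ hΛ
  have hsum : (dCw S c0 % Λ + dCw c0 S % Λ) % Λ = 0 := by
    rcases eq_or_ne S c0 with heq | hne
    · rw [heq, dCw_self]
      simp
    · have h1 := dCw_anticomm hne
      calc (dCw S c0 % Λ + dCw c0 S % Λ) % Λ = (dCw S c0 + dCw c0 S) % Λ := by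
            rw [← Nat.add_mod]
        _ = (n+1) % Λ := by rw [h1]
        _ = 0 := Nat.eq_zero_of_dvd_of_lt hdvd |> fun _ => Nat.mod_eq_zero_of_dvd hdvd
  have hD : dCw S g % Λ = dCw S c0 % Λ ∨ dCw S g = 0 := by
    rcases hsub g (maxSet_subset hg) with heq | hgH
    · exact Or.inr (by rw [heq, dCw_self])
    · left
      rw [dCw_modL hdvd, dCw_modL hdvd, (homed_iff hdvd lam g).mp hgH]
  have hnxtA : nxt A g ∈ A := nxt_mem' (maxSet_subset hg)
  have hD' : dCw (nxt A g) S % Λ = dCw c0 S % Λ ∨ dCw (nxt A g) S = 0 := by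
    rcases hsub _ hnxtA with heq | hH
    · exact Or.inr (by rw [heq, dCw_self])
    · left
      rw [dCw_modL hdvd, dCw_modL hdvd, (homed_iff hdvd lam _).mp hH]
  have hsum2 := dCw_sum hS hg
  have hmain := count_bound hΛ hr hrb hsum hD hD'
  rw [hsum2] at hmain
  exact hmain

end Cnt

section Equivariance
variable {A : Finset (Fin (n+1))} {c x S m : Fin (n+1)}

lemma mem_image_add {y c : Fin (n+1)} {A : Finset (Fin (n+1))} :
    y + c ∈ A.image (· + c) ↔ y ∈ A := by
  simp only [Finset.mem_image, add_left_inj]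
  constructor
  · rintro ⟨a, ha, rfl⟩; exact ha
  · intro h; exact ⟨y, h, rfl⟩

lemma gapLen_image_add (A : Finset (Fin (n+1))) (x c : Fin (n+1)) :
    gapLen (A.image (· + c)) (x + c) = gapLen A x := by
  rw [gapLen_def, gapLen_def]
  congr 1; ext d
  simp only [Set.mem_setOf_eq]
  have h : x + c + (d : Fin (n+1)) = (x + (d : Fin (n+1))) + c := by ring
  rw [h, mem_image_add]

lemma maxGap_image_add (A : Finset (Fin (n+1))) (c : Fin (n+1)) :
    maxGap (A.image (· + c)) = maxGap A := by
  unfold maxGap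
  rw [Finset.sup_image]
  refine Finset.sup_congr rfl fun x _ => ?_
  exact gapLen_image_add A x c

lemma maxSet_image_add (A : Finset (Fin (n+1))) (c : Fin (n+1)) :
    maxSet (A.image (· + c)) = (maxSet A).image (· + c) := by
  unfold maxSet
  rw [Finset.filter_image]
  congr 1
  apply Finset.filter_congr
  intro x _
  rw [gapLen_image_add, maxGap_image_add]

lemma segUse_image_add (A : Finset (Fin (n+1))) (S m c : Fin (n+1)) :
    segUseProb (A.image (· + c)) (S + c) (m + c) = segUseProb A S m := by
  unfold segUseProb
  rw [maxSet_image_add, Finset.filter_image,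
    Finset.card_image_of_injOn ((add_left_injective c).injOn),
    Finset.card_image_of_injOn ((add_left_injective c).injOn)]
  simp only [dCw_add_cancel]

lemma mem_image_sub {y c : Fin (n+1)} {A : Finset (Fin (n+1))} :
    c - y ∈ A.image (c - ·) ↔ y ∈ A := by
  simp only [Finset.mem_image]
  constructor
  · rintro ⟨a, ha, heq⟩
    have : a = y := by linear_combination -heq
    rwa [← this]
  · intro h; exact ⟨y, h, rfl⟩

lemma sub_injective (c : Fin (n+1)) : Function.Injective (c - ·) := by
  intro a b h
  simpa using congrArg (fun z => c - z) h

lemma gapLen_image_sub (A : Finset (Fin (n+1))) (y c : Fin (n+1)) :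
    gapLen (A.image (c - ·)) (c - y) = gapLenB A y := by
  rw [gapLen_def]
  unfold gapLenB
  congr 1; ext d
  simp only [Set.mem_setOf_eq]
  have h : (c - y) + (d : Fin (n+1)) = c - (y - (d : Fin (n+1))) := by ring
  rw [h, mem_image_sub]

lemma maxGap_image_sub (A : Finset (Fin (n+1))) (c : Fin (n+1)) :
    maxGap (A.image (c - ·)) = maxGap A := by
  calc maxGap (A.image (c - ·)) = A.sup (gapLen (A.image (c - ·)) ∘ (c - ·)) := by
        unfold maxGap; rw [Finset.sup_image]
    _ = A.sup (gapLenB A) := Finset.sup_congr rfl fun y _ => gapLen_image_sub A y c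
    _ = maxGap A := supB A

lemma maxSet_image_sub (A : Finset (Fin (n+1))) (c : Fin (n+1)) :
    maxSet (A.image (c - ·)) = (maxSetB A).image (c - ·) := by
  unfold maxSet maxSetB
  rw [Finset.filter_image]
  congr 1
  apply Finset.filter_congr
  intro y _
  rw [gapLen_image_sub, maxGap_image_sub]

lemma dCw_sub_sub (c a b : Fin (n+1)) : dCw (c - a) (c - b) = dCw b a := by
  rw [dCw_eq, dCw_eq]
  congr 1
  ring

lemma erase_image {φ : Equiv.Perm (Fin (n+1))} {H : Finset (Fin (n+1))}
    (hφ : ∀ x, φ x ∈ H ↔ x ∈ H) (S : Fin (n+1)) :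
    (H.erase S).image φ = H.erase (φ S) := by
  ext y
  simp only [Finset.mem_image, Finset.mem_erase]
  constructor
  · rintro ⟨x, ⟨hx1, hx2⟩, rfl⟩
    exact ⟨fun h => hx1 (φ.injective h), (hφ x).mpr hx2⟩
  · rintro ⟨hy1, hy2⟩
    refine ⟨φ.symm y, ⟨?_, ?_⟩, φ.apply_symm_apply y⟩
    · intro h
      apply hy1
      rw [← h, φ.apply_symm_apply]
    · rw [← hφ, φ.apply_symm_apply]
      exact hy2

lemma sum_pc_reindex {H : Finset (Fin (n+1))} {ℓ : ℕ} {φ : Equiv.Perm (Fin (n+1))}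
    (hφ : ∀ x, φ x ∈ H ↔ x ∈ H) (S : Fin (n+1)) (f : Finset (Fin (n+1)) → ℚ) :
    ∑ F ∈ ((H.erase (φ S)).powersetCard ℓ), f F
      = ∑ F ∈ ((H.erase S).powersetCard ℓ), f (F.image φ) := by
  have hφ' : ∀ x, φ.symm x ∈ H ↔ x ∈ H := by
    intro x
    conv_rhs => rw [← φ.apply_symm_apply x]
    exact (hφ (φ.symm x)).symm
  have himg1 : ∀ G : Finset (Fin (n+1)),
      Finset.image (⇑φ.symm) (Finset.image (⇑φ) G) = G := by
    intro G; rw [Finset.image_image, Equiv.symm_comp_self, Finset.image_id]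
  have himg2 : ∀ G : Finset (Fin (n+1)),
      Finset.image (⇑φ) (Finset.image (⇑φ.symm) G) = G := by
    intro G; rw [Finset.image_image, Equiv.self_comp_symm, Finset.image_id]
  symm
  apply Finset.sum_nbij' (i := fun F => F.image (φ : Fin (n+1) → Fin (n+1)))
    (j := fun F => F.image (φ.symm : Fin (n+1) → Fin (n+1)))
  · intro F hF
    rw [Finset.mem_powersetCard] at hF ⊢
    refine ⟨?_, by rw [Finset.card_image_of_injective _ φ.injective]; exact hF.2⟩
    rw [← erase_image hφ]
    exact Finset.image_subset_image hF.1
  · intro F hF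
    rw [Finset.mem_powersetCard] at hF ⊢
    refine ⟨?_, by rw [Finset.card_image_of_injective _ φ.symm.injective]; exact hF.2⟩
    intro y hy
    obtain ⟨x, hx, rfl⟩ := Finset.mem_image.mp hy
    have hx2 := Finset.mem_erase.mp (hF.1 hx)
    rw [Finset.mem_erase]
    constructor
    · intro h
      apply hx2.1
      rw [← h, φ.apply_symm_apply]
    · exact (hφ' x).mpr hx2.2
  · intro F _
    exact himg1 F
  · intro F _
    exact himg2 F
  · intro F _
    rfl

end Equivariance

section Main
variable {Λ η lam ℓ : ℕ}

/-- denominator -/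
noncomputable def Wq (Λ lam ℓ : ℕ) (S : Fin (n+1)) : ℚ :=
  ((((homed (n+1) Λ lam).erase S).powersetCard ℓ).card : ℚ)

/-- numerator of uniSegProb -/
noncomputable def Pq (Λ lam ℓ : ℕ) (m : Fin (n+1)) : ℚ :=
  ∑ S : Fin (n+1), (∑ F ∈ ((homed (n+1) Λ lam).erase S).powersetCard ℓ,
      segUseProb (insert S F) S m) / Wq Λ lam ℓ S

/-- numerator of uniClgExp -/
noncomputable def Gq (Λ lam ℓ : ℕ) : ℚ :=
  ∑ S : Fin (n+1), (∑ F ∈ ((homed (n+1) Λ lam).erase S).powersetCard ℓ,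
      (maxGap (insert S F) : ℚ)) / Wq Λ lam ℓ S

noncomputable def Bfun (Λ lam : ℕ) (S : Fin (n+1)) (F : Finset (Fin (n+1))) : ℚ :=
  (∑ g ∈ maxSet (insert S F),
      (cNat Λ (dCw S ((lam : ℕ) : Fin (n+1)) % Λ) (dCw S g) : ℚ))
    / ((maxSet (insert S F)).card : ℚ)

noncomputable def Bref (Λ lam : ℕ) (S : Fin (n+1)) (F : Finset (Fin (n+1))) : ℚ :=
  (∑ g ∈ maxSet (insert S F),
      (cNat Λ (dCw ((lam : ℕ) : Fin (n+1)) S % Λ) (dCw (nxt (insert S F) g) S) : ℚ))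
    / ((maxSet (insert S F)).card : ℚ)

lemma Wq_perm {φ : Equiv.Perm (Fin (n+1))}
    (hφ : ∀ x, φ x ∈ homed (n+1) Λ lam ↔ x ∈ homed (n+1) Λ lam) (S : Fin (n+1)) :
    Wq Λ lam ℓ (φ S) = Wq Λ lam ℓ S := by
  unfold Wq
  rw [Finset.card_powersetCard, Finset.card_powersetCard, ← erase_image hφ S,
    Finset.card_image_of_injective _ φ.injective]

lemma Pq_rot (m c : Fin (n+1))
    (hHc : ∀ x, x + c ∈ homed (n+1) Λ lam ↔ x ∈ homed (n+1) Λ lam) :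
    Pq Λ lam ℓ (m + c) = Pq Λ lam ℓ m := by
  set φ : Equiv.Perm (Fin (n+1)) := Equiv.addRight c with hφdef
  have hφH : ∀ x, φ x ∈ homed (n+1) Λ lam ↔ x ∈ homed (n+1) Λ lam := hHc
  unfold Pq
  rw [← Equiv.sum_comp φ (fun S => (∑ F ∈ ((homed (n+1) Λ lam).erase S).powersetCard ℓ,
      segUseProb (insert S F) S (m + c)) / Wq Λ lam ℓ S)]
  apply Finset.sum_congr rfl
  intro S _
  show (∑ F ∈ ((homed (n+1) Λ lam).erase (φ S)).powersetCard ℓ,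
      segUseProb (insert (φ S) F) (φ S) (m + c)) / Wq Λ lam ℓ (φ S) = _
  rw [Wq_perm hφH S, sum_pc_reindex hφH S (fun F => segUseProb (insert (φ S) F) (φ S) (m + c))]
  congr 1
  apply Finset.sum_congr rfl
  intro F _
  show segUseProb (insert (S + c) (F.image (· + c))) (S + c) (m + c) = segUseProb (insert S F) S m
  rw [show insert (S + c) (F.image (· + c)) = (insert S F).image (· + c) from
    (Finset.image_insert _ S F).symm]
  exact segUse_image_add (insert S F) S m c

lemma rot_pres (hN : n + 1 = η * Λ) (hΛ : 0 < Λ) (k : ℕ) :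
    ∀ x : Fin (n+1), x + ((k*Λ : ℕ) : Fin (n+1)) ∈ homed (n+1) Λ lam
      ↔ x ∈ homed (n+1) Λ lam := by
  haveI : NeZero Λ := ⟨hΛ.ne'⟩
  have hdvd : Λ ∣ (n+1) := ⟨η, by rw [hN]; ring⟩
  intro x
  rw [homed_iff hdvd, homed_iff hdvd, rho_add hdvd, rho_natCast hdvd]
  have h0 : ((k*Λ : ℕ) : ZMod Λ) = 0 := by
    push_cast
    rw [ZMod.natCast_self]
    ring
  rw [h0, add_zero]

lemma sum_seguse (hN : n + 1 = η * Λ) (hΛ : 0 < Λ) (S : Fin (n+1)) (A : Finset (Fin (n+1))) :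
    ∑ k ∈ Finset.range η, segUseProb A S (((lam:ℕ) : Fin (n+1)) + ((k*Λ:ℕ) : Fin (n+1)))
      = (∑ g ∈ maxSet A, (cNat Λ (dCw S ((lam:ℕ):Fin (n+1)) % Λ) (dCw S g) : ℚ))
        / ((maxSet A).card : ℚ) := by
  unfold segUseProb
  rw [← Finset.sum_div]
  congr 1
  have hnat : ∑ k ∈ Finset.range η, ((maxSet A).filter
      (fun g => 1 ≤ dCw S (((lam:ℕ):Fin (n+1)) + ((k*Λ:ℕ):Fin (n+1))) ∧
        dCw S (((lam:ℕ):Fin (n+1)) + ((k*Λ:ℕ):Fin (n+1))) ≤ dCw S g)).card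
      = ∑ g ∈ maxSet A, cNat Λ (dCw S ((lam:ℕ):Fin (n+1)) % Λ) (dCw S g) := by
    calc ∑ k ∈ Finset.range η, ((maxSet A).filter
        (fun g => 1 ≤ dCw S (((lam:ℕ):Fin (n+1)) + ((k*Λ:ℕ):Fin (n+1))) ∧
          dCw S (((lam:ℕ):Fin (n+1)) + ((k*Λ:ℕ):Fin (n+1))) ≤ dCw S g)).card
        = ∑ k ∈ Finset.range η, ∑ g ∈ maxSet A,
            if 1 ≤ dCw S (((lam:ℕ):Fin (n+1)) + ((k*Λ:ℕ):Fin (n+1))) ∧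
              dCw S (((lam:ℕ):Fin (n+1)) + ((k*Λ:ℕ):Fin (n+1))) ≤ dCw S g then 1 else 0 :=
          Finset.sum_congr rfl fun k _ => Finset.card_filter _ _
      _ = ∑ g ∈ maxSet A, ∑ k ∈ Finset.range η,
            if 1 ≤ dCw S (((lam:ℕ):Fin (n+1)) + ((k*Λ:ℕ):Fin (n+1))) ∧
              dCw S (((lam:ℕ):Fin (n+1)) + ((k*Λ:ℕ):Fin (n+1))) ≤ dCw S g then 1 else 0 :=
          Finset.sum_comm
      _ = ∑ g ∈ maxSet A, ((Finset.range η).filter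
            (fun k => 1 ≤ dCw S (((lam:ℕ):Fin (n+1)) + ((k*Λ:ℕ):Fin (n+1))) ∧
              dCw S (((lam:ℕ):Fin (n+1)) + ((k*Λ:ℕ):Fin (n+1))) ≤ dCw S g)).card :=
          Finset.sum_congr rfl fun g _ => (Finset.card_filter _ _).symm
      _ = ∑ g ∈ maxSet A, cNat Λ (dCw S ((lam:ℕ):Fin (n+1)) % Λ) (dCw S g) :=
          Finset.sum_congr rfl fun g _ => cnt_eq hN hΛ S _ (dCw_lt S g)
  calc ∑ k ∈ Finset.range η, (((maxSet A).filter
      (fun g => 1 ≤ dCw S (((lam:ℕ):Fin (n+1)) + ((k*Λ:ℕ):Fin (n+1))) ∧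
        dCw S (((lam:ℕ):Fin (n+1)) + ((k*Λ:ℕ):Fin (n+1))) ≤ dCw S g)).card : ℚ)
      = ((∑ k ∈ Finset.range η, ((maxSet A).filter
          (fun g => 1 ≤ dCw S (((lam:ℕ):Fin (n+1)) + ((k*Λ:ℕ):Fin (n+1))) ∧
            dCw S (((lam:ℕ):Fin (n+1)) + ((k*Λ:ℕ):Fin (n+1))) ≤ dCw S g)).card : ℕ) : ℚ) := by
        push_cast
        rfl
    _ = _ := by
        rw [hnat]
        push_cast
        rfl

lemma eta_Pq (hN : n + 1 = η * Λ) (hΛ : 0 < Λ) :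
    (η : ℚ) * Pq Λ lam ℓ ((lam : ℕ) : Fin (n+1))
      = ∑ S : Fin (n+1), (∑ F ∈ ((homed (n+1) Λ lam).erase S).powersetCard ℓ,
          Bfun Λ lam S F) / Wq Λ lam ℓ S := by
  have h1 : ∀ k ∈ Finset.range η,
      Pq Λ lam ℓ (((lam:ℕ):Fin (n+1)) + ((k*Λ:ℕ):Fin (n+1))) = Pq Λ lam ℓ ((lam:ℕ):Fin (n+1)) :=
    fun k _ => Pq_rot _ _ (rot_pres hN hΛ k)
  have h2 : (η:ℚ) * Pq Λ lam ℓ ((lam:ℕ):Fin (n+1))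
      = ∑ k ∈ Finset.range η, Pq Λ lam ℓ (((lam:ℕ):Fin (n+1)) + ((k*Λ:ℕ):Fin (n+1))) := by
    rw [Finset.sum_congr rfl h1, Finset.sum_const, Finset.card_range, nsmul_eq_mul]
  rw [h2]
  unfold Pq
  rw [Finset.sum_comm]
  apply Finset.sum_congr rfl
  intro S _
  rw [← Finset.sum_div]
  congr 1
  rw [Finset.sum_comm]
  apply Finset.sum_congr rfl
  intro F _
  unfold Bfun
  exact sum_seguse hN hΛ S (insert S F)

lemma refl_pres (hN : n + 1 = η * Λ) (hΛ : 0 < Λ) (hlam : 1 ≤ lam) :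
    ∀ x : Fin (n+1), (((lam:ℕ):Fin (n+1)) + ((lam:ℕ):Fin (n+1))) - x ∈ homed (n+1) Λ lam
      ↔ x ∈ homed (n+1) Λ lam := by
  haveI : NeZero Λ := ⟨hΛ.ne'⟩
  have hdvd : Λ ∣ (n+1) := ⟨η, by rw [hN]; ring⟩
  intro x
  rw [homed_iff hdvd, homed_iff hdvd, rho_sub hdvd, rho_add hdvd]
  constructor
  · intro h
    linear_combination -h
  · intro h
    rw [h]
    ring

lemma Bfun_reflect (S : Fin (n+1)) (F : Finset (Fin (n+1))) :
    Bfun Λ lam ((((lam:ℕ):Fin (n+1)) + ((lam:ℕ):Fin (n+1))) - S)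
        (F.image ((((lam:ℕ):Fin (n+1)) + ((lam:ℕ):Fin (n+1))) - ·))
      = Bref Λ lam S F := by
  set c0 : Fin (n+1) := ((lam:ℕ):Fin (n+1)) with hc0
  set A := insert S F with hA
  have hins : insert (c0 + c0 - S) (F.image (c0 + c0 - ·)) = A.image (c0 + c0 - ·) := by
    rw [hA, Finset.image_insert]
  unfold Bfun Bref
  rw [hins, maxSet_image_sub]
  have hd : dCw (c0 + c0 - S) c0 = dCw c0 S := by
    have h := dCw_sub_sub (c0 + c0) S c0
    rwa [show c0 + c0 - c0 = c0 from by ring] at h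
  have hinj : ∀ x ∈ maxSetB A, ∀ y ∈ maxSetB A,
      (fun z => c0 + c0 - z) x = (fun z => c0 + c0 - z) y → x = y :=
    fun x _ y _ h => sub_injective (c0 + c0) h
  rw [Finset.sum_image hinj]
  simp only [dCw_sub_sub, hd]
  rw [Finset.card_image_of_injective _ (sub_injective (c0 + c0)), maxSetB_card, maxSetB_eq]
  have hinj2 : ∀ x ∈ maxSet A, ∀ y ∈ maxSet A, nxt A x = nxt A y → x = y :=
    fun x hx y hy h => nxt_injOn A (maxSet_subset hx) (maxSet_subset hy) h
  rw [Finset.sum_image hinj2]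
  erw [hd]

lemma ref_eq (hN : n + 1 = η * Λ) (hΛ : 0 < Λ) (hlam : 1 ≤ lam) :
    ∑ S : Fin (n+1), (∑ F ∈ ((homed (n+1) Λ lam).erase S).powersetCard ℓ,
        Bfun Λ lam S F) / Wq Λ lam ℓ S
      = ∑ S : Fin (n+1), (∑ F ∈ ((homed (n+1) Λ lam).erase S).powersetCard ℓ,
          Bref Λ lam S F) / Wq Λ lam ℓ S := by
  set φ : Equiv.Perm (Fin (n+1)) :=
    Equiv.subLeft (((lam:ℕ):Fin (n+1)) + ((lam:ℕ):Fin (n+1))) with hφdef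
  have hφH : ∀ x, φ x ∈ homed (n+1) Λ lam ↔ x ∈ homed (n+1) Λ lam := refl_pres hN hΛ hlam
  rw [← Equiv.sum_comp φ (fun S => (∑ F ∈ ((homed (n+1) Λ lam).erase S).powersetCard ℓ,
      Bfun Λ lam S F) / Wq Λ lam ℓ S)]
  apply Finset.sum_congr rfl
  intro S _
  show (∑ F ∈ ((homed (n+1) Λ lam).erase (φ S)).powersetCard ℓ,
      Bfun Λ lam (φ S) F) / Wq Λ lam ℓ (φ S) = _
  rw [Wq_perm hφH S, sum_pc_reindex hφH S (fun F => Bfun Λ lam (φ S) F)]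
  congr 1
  apply Finset.sum_congr rfl
  intro F _
  exact Bfun_reflect S F

lemma Wq_pos (hN : n + 1 = η * Λ) (hΛ : 0 < Λ) (hη : 0 < η) (hlam : 1 ≤ lam)
    (hℓ : ℓ ≤ η - 1) (S : Fin (n+1)) : 0 < Wq Λ lam ℓ S := by
  unfold Wq
  rw [Finset.card_powersetCard]
  have hH : (homed (n+1) Λ lam).card = η := homed_card hN hΛ lam hlam
  have h1 : (homed (n+1) Λ lam).card - 1 ≤ ((homed (n+1) Λ lam).erase S).card :=
    Finset.pred_card_le_card_erase
  have hpos : 0 < ((homed (n+1) Λ lam).erase S).card.choose ℓ :=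
    Nat.choose_pos (by omega)
  exact_mod_cast hpos

lemma B_bound (hN : n + 1 = η * Λ) (hΛ : 0 < Λ) {S : Fin (n+1)} {F : Finset (Fin (n+1))}
    (hF : F ∈ ((homed (n+1) Λ lam).erase S).powersetCard ℓ) :
    ((n+1 : ℚ) - maxGap (insert S F)) / Λ ≤ Bfun Λ lam S F + Bref Λ lam S F ∧
    Bfun Λ lam S F + Bref Λ lam S F ≤ ((n+1 : ℚ) - maxGap (insert S F)) / Λ
      + (if dCw S ((lam:ℕ):Fin (n+1)) % Λ = 0 then 0 else 1) := by
  set A := insert S F with hA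
  have hS : S ∈ A := Finset.mem_insert_self S F
  have hsub : ∀ a ∈ A, a = S ∨ a ∈ homed (n+1) Λ lam := by
    intro a ha
    rcases Finset.mem_insert.mp ha with h | h
    · exact Or.inl h
    · exact Or.inr (Finset.mem_of_mem_erase ((Finset.mem_powersetCard.mp hF).1 h))
  have hMne : (maxSet A).Nonempty := maxSet_nonempty ⟨S, hS⟩
  have hcard : (0:ℚ) < ((maxSet A).card : ℚ) := by
    exact_mod_cast Finset.card_pos.mpr hMne
  have hL : maxGap A ≤ n+1 := maxGap_le ⟨S, hS⟩
  have hΛq : (0:ℚ) < (Λ : ℚ) := by exact_mod_cast hΛ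
  set cs : Fin (n+1) → ℕ := fun g => cNat Λ (dCw S ((lam:ℕ):Fin (n+1)) % Λ) (dCw S g)
      + cNat Λ (dCw ((lam:ℕ):Fin (n+1)) S % Λ) (dCw (nxt A g) S) with hcs
  have hBB : Bfun Λ lam S F + Bref Λ lam S F
      = ((∑ g ∈ maxSet A, cs g : ℕ) : ℚ) / ((maxSet A).card : ℚ) := by
    unfold Bfun Bref
    rw [← add_div, ← Finset.sum_add_distrib]
    congr 1
    rw [Nat.cast_sum]
    exact Finset.sum_congr rfl fun g _ => (Nat.cast_add _ _).symm
  have hlow : ∀ g ∈ maxSet A, (n+1) - maxGap A ≤ Λ * cs g :=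
    fun g hg => (config_bound hN hΛ hS hsub hg).1
  have hhigh : ∀ g ∈ maxSet A, Λ * cs g ≤ (n+1) - maxGap A
      + (if dCw S ((lam:ℕ):Fin (n+1)) % Λ = 0 then 0 else Λ) :=
    fun g hg => (config_bound hN hΛ hS hsub hg).2
  have hlowsum : (maxSet A).card * ((n+1) - maxGap A) ≤ Λ * ∑ g ∈ maxSet A, cs g := by
    rw [Finset.mul_sum]
    calc (maxSet A).card * ((n+1) - maxGap A)
        = ∑ _g ∈ maxSet A, ((n+1) - maxGap A) := by rw [Finset.sum_const, smul_eq_mul]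
      _ ≤ ∑ g ∈ maxSet A, Λ * cs g := Finset.sum_le_sum hlow
  have hhighsum : Λ * ∑ g ∈ maxSet A, cs g ≤ (maxSet A).card * ((n+1) - maxGap A
      + (if dCw S ((lam:ℕ):Fin (n+1)) % Λ = 0 then 0 else Λ)) := by
    rw [Finset.mul_sum]
    calc ∑ g ∈ maxSet A, Λ * cs g
        ≤ ∑ _g ∈ maxSet A, ((n+1) - maxGap A
            + (if dCw S ((lam:ℕ):Fin (n+1)) % Λ = 0 then 0 else Λ)) :=
          Finset.sum_le_sum hhigh
      _ = _ := by rw [Finset.sum_const, smul_eq_mul]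
  set T : ℕ := ∑ g ∈ maxSet A, cs g with hT
  rw [hBB]
  constructor
  · rw [div_le_div_iff₀ hΛq hcard]
    have hcast := (Nat.cast_le (α := ℚ)).mpr hlowsum
    push_cast [Nat.cast_sub hL] at hcast
    ring_nf at hcast ⊢
    linarith
  · by_cases hr0 : dCw S ((lam:ℕ):Fin (n+1)) % Λ = 0
    · simp only [hr0, if_pos, Nat.add_zero] at hhighsum
      simp only [hr0, if_pos, add_zero]
      rw [div_le_div_iff₀ hcard hΛq]
      have hcast := (Nat.cast_le (α := ℚ)).mpr hhighsum
      push_cast [Nat.cast_sub hL] at hcast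
      ring_nf at hcast ⊢
      linarith
    · simp only [if_neg hr0] at hhighsum
      simp only [if_neg hr0]
      have h2 : ((n:ℚ) + 1 - (maxGap A : ℚ)) / (Λ:ℚ) + 1
          = ((n:ℚ) + 1 - (maxGap A : ℚ) + (Λ:ℚ))/(Λ:ℚ) := by
        field_simp
      push_cast
      rw [h2, div_le_div_iff₀ hcard hΛq]
      have hcast := (Nat.cast_le (α := ℚ)).mpr hhighsum
      push_cast [Nat.cast_sub hL] at hcast
      ring_nf at hcast ⊢
      linarith

lemma eS_sum (hN : n + 1 = η * Λ) (hΛ : 0 < Λ) (hlam : 1 ≤ lam) :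
    (∑ S : Fin (n+1), (if dCw S ((lam:ℕ):Fin (n+1)) % Λ = 0 then (0:ℚ) else 1))
      = (n+1 : ℚ) - η := by
  haveI : NeZero Λ := ⟨hΛ.ne'⟩
  have hdvd : Λ ∣ (n+1) := ⟨η, by rw [hN]; ring⟩
  have hiff : ∀ S : Fin (n+1),
      (dCw S ((lam:ℕ):Fin (n+1)) % Λ = 0) ↔ S ∈ homed (n+1) Λ lam := by
    intro S
    rw [dCw_modL hdvd, homed_iff hdvd, ZMod.val_eq_zero, sub_eq_zero]
    exact ⟨fun h => h.symm, fun h => h.symm⟩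
  have h1 : ∀ S : Fin (n+1), (if dCw S ((lam:ℕ):Fin (n+1)) % Λ = 0 then (0:ℚ) else 1)
      = 1 - (if S ∈ homed (n+1) Λ lam then 1 else 0) := by
    intro S
    rw [if_congr (hiff S) rfl rfl]
    split_ifs <;> ring
  rw [Finset.sum_congr rfl (fun S _ => h1 S), Finset.sum_sub_distrib, Finset.sum_const,
    Finset.card_univ, Fintype.card_fin]
  have h2 : (∑ S : Fin (n+1), if S ∈ homed (n+1) Λ lam then (1:ℚ) else 0)
      = ((homed (n+1) Λ lam).card : ℚ) := by
    rw [Finset.sum_boole]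
    congr 2
    ext x
    simp
  rw [h2, homed_card hN hΛ lam hlam, nsmul_eq_mul]
  push_cast
  ring

lemma main_bounds (hN : n + 1 = η * Λ) (hΛ : 0 < Λ) (hη : 0 < η) (hlam : 1 ≤ lam)
    (hℓ : ℓ ≤ η - 1) :
    (((n:ℚ)+1)^2 - Gq (n := n) Λ lam ℓ)/Λ ≤ 2 * ((η:ℚ) * Pq Λ lam ℓ ((lam:ℕ):Fin (n+1))) ∧
    2 * ((η:ℚ) * Pq Λ lam ℓ ((lam:ℕ):Fin (n+1)))
      ≤ (((n:ℚ)+1)^2 - Gq (n := n) Λ lam ℓ)/Λ + (((n:ℚ)+1) - η) := by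
  have hWpos : ∀ S : Fin (n+1), 0 < Wq Λ lam ℓ S := Wq_pos hN hΛ hη hlam hℓ
  have hΛq : (0:ℚ) < Λ := by exact_mod_cast hΛ
  have e1 := eta_Pq (lam := lam) (ℓ := ℓ) hN hΛ
  have e2 := e1.trans (ref_eq hN hΛ hlam)
  have h2P : 2 * ((η:ℚ) * Pq Λ lam ℓ ((lam:ℕ):Fin (n+1)))
      = ∑ S : Fin (n+1), (∑ F ∈ ((homed (n+1) Λ lam).erase S).powersetCard ℓ,
          (Bfun Λ lam S F + Bref Λ lam S F)) / Wq Λ lam ℓ S := by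
    rw [two_mul]
    nth_rewrite 1 [e1]
    rw [e2, ← Finset.sum_add_distrib]
    apply Finset.sum_congr rfl
    intro S _
    rw [← add_div, ← Finset.sum_add_distrib]
  have hstep : ∀ S : Fin (n+1),
      (∑ F ∈ ((homed (n+1) Λ lam).erase S).powersetCard ℓ,
        (((n:ℚ)+1) - (maxGap (insert S F) : ℚ))/(Λ:ℚ))/Wq Λ lam ℓ S
      = ((n:ℚ)+1)/(Λ:ℚ) - ((∑ F ∈ ((homed (n+1) Λ lam).erase S).powersetCard ℓ,
          (maxGap (insert S F) : ℚ))/Wq Λ lam ℓ S)/(Λ:ℚ) := by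
    intro S
    rw [← Finset.sum_div, Finset.sum_sub_distrib, Finset.sum_const, nsmul_eq_mul]
    have hW' : ((((homed (n+1) Λ lam).erase S).powersetCard ℓ).card : ℚ) ≠ 0 :=
      (hWpos S).ne'
    have hWeq : ((((homed (n+1) Λ lam).erase S).powersetCard ℓ).card : ℚ) = Wq Λ lam ℓ S := rfl
    rw [hWeq] at hW' ⊢
    field_simp
  have hcomp : ∑ S : Fin (n+1),
      (∑ F ∈ ((homed (n+1) Λ lam).erase S).powersetCard ℓ,
        (((n:ℚ)+1) - (maxGap (insert S F) : ℚ))/(Λ:ℚ))/Wq Λ lam ℓ S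
      = (((n:ℚ)+1)^2 - Gq (n := n) Λ lam ℓ)/Λ := by
    rw [Finset.sum_congr rfl (fun S _ => hstep S), Finset.sum_sub_distrib, Finset.sum_const,
      Finset.card_univ, Fintype.card_fin, nsmul_eq_mul, ← Finset.sum_div]
    unfold Gq
    push_cast
    field_simp
  have hstep2 : ∀ S : Fin (n+1),
      (∑ F ∈ ((homed (n+1) Λ lam).erase S).powersetCard ℓ,
        ((((n:ℚ)+1) - (maxGap (insert S F) : ℚ))/(Λ:ℚ)
          + (if dCw S ((lam:ℕ):Fin (n+1)) % Λ = 0 then (0:ℚ) else 1)))/Wq Λ lam ℓ S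
      = (∑ F ∈ ((homed (n+1) Λ lam).erase S).powersetCard ℓ,
          (((n:ℚ)+1) - (maxGap (insert S F) : ℚ))/(Λ:ℚ))/Wq Λ lam ℓ S
        + (if dCw S ((lam:ℕ):Fin (n+1)) % Λ = 0 then (0:ℚ) else 1) := by
    intro S
    rw [Finset.sum_add_distrib, Finset.sum_const, nsmul_eq_mul, add_div]
    congr 1
    have hW' : ((((homed (n+1) Λ lam).erase S).powersetCard ℓ).card : ℚ) ≠ 0 :=
      (hWpos S).ne'
    have hWeq : ((((homed (n+1) Λ lam).erase S).powersetCard ℓ).card : ℚ) = Wq Λ lam ℓ S := rfl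
    rw [hWeq] at hW' ⊢
    field_simp
  constructor
  · rw [h2P, ← hcomp]
    apply Finset.sum_le_sum
    intro S _
    apply (div_le_div_iff_of_pos_right (hWpos S)).mpr
    apply Finset.sum_le_sum
    intro F hF
    exact (B_bound hN hΛ hF).1
  · rw [h2P]
    calc ∑ S : Fin (n+1), (∑ F ∈ ((homed (n+1) Λ lam).erase S).powersetCard ℓ,
          (Bfun Λ lam S F + Bref Λ lam S F)) / Wq Λ lam ℓ S
        ≤ ∑ S : Fin (n+1), (∑ F ∈ ((homed (n+1) Λ lam).erase S).powersetCard ℓ,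
            ((((n:ℚ)+1) - (maxGap (insert S F) : ℚ))/(Λ:ℚ)
              + (if dCw S ((lam:ℕ):Fin (n+1)) % Λ = 0 then (0:ℚ) else 1))) / Wq Λ lam ℓ S := by
          apply Finset.sum_le_sum
          intro S _
          apply (div_le_div_iff_of_pos_right (hWpos S)).mpr
          apply Finset.sum_le_sum
          intro F hF
          exact (B_bound hN hΛ hF).2
      _ = (((n:ℚ)+1)^2 - Gq (n := n) Λ lam ℓ)/Λ + (((n:ℚ)+1) - η) := by
          rw [Finset.sum_congr rfl (fun S _ => hstep2 S), Finset.sum_add_distrib, hcomp,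
            eS_sum hN hΛ hlam]

end Main

end S15

noncomputable section
/-- Uniform traffic, conditioned on `ℓ` destinations on wavelength `lam`: utilization
probability of the clockwise segment entering node `n` (sender uniform over all `N`
nodes, destinations a uniformly random `ℓ`-subset of the homed nodes other than the
sender). -/
def uniSegProb (N Λ lam ℓ : ℕ) (n : Fin N) : ℚ :=
  (∑ S : Fin N,
      (∑ F ∈ ((homed N Λ lam).erase S).powersetCard ℓ, segUseProb (insert S F) S n) /
        ((((homed N Λ lam).erase S).powersetCard ℓ).card : ℚ)) / (N : ℚ)

/-- Uniform traffic, conditioned on `ℓ` destinations on wavelength `lam`: expected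
length of the chosen largest gap on that wavelength. -/
def uniClgExp (N Λ lam ℓ : ℕ) : ℚ :=
  (∑ S : Fin N,
      (∑ F ∈ ((homed N Λ lam).erase S).powersetCard ℓ, (maxGap (insert S F) : ℚ)) /
        ((((homed N Λ lam).erase S).powersetCard ℓ).card : ℚ)) / (N : ℚ)

open Fin.NatCast Fin.CommRing in
/-- For uniform traffic with `ℓ` destinations on wavelength `lam`,
the maximum critical-segment utilization (the clockwise segment entering node `lam`)
satisfies `1/2 - E^ℓ|CLG|/(2N) ≤ P_α^ℓ ≤ 1/2 - E^ℓ|CLG|/(2N) + (Λ-1)/(2N)`. -/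
theorem stmt15 (N Λ η lam ℓ : ℕ) (hN : N = η * Λ) (hNpos : 0 < N)
    (hlam1 : 1 ≤ lam) (hlamΛ : lam ≤ Λ) (hη : 0 < η) (hℓ : ℓ ≤ η - 1) :
    1 / 2 - uniClgExp N Λ lam ℓ / (2 * N)
      ≤ uniSegProb N Λ lam ℓ ⟨lam % N, Nat.mod_lt _ hNpos⟩ ∧
    uniSegProb N Λ lam ℓ ⟨lam % N, Nat.mod_lt _ hNpos⟩
      ≤ 1 / 2 - uniClgExp N Λ lam ℓ / (2 * N) + ((Λ : ℚ) - 1) / (2 * N) := by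
  obtain ⟨n, rfl⟩ : ∃ n, N = n + 1 := ⟨N - 1, by omega⟩
  have hΛ : 0 < Λ := by omega
  have hN' : n + 1 = η * Λ := hN
  have hm0 : (⟨lam % (n+1), Nat.mod_lt _ hNpos⟩ : Fin (n+1)) = ((lam : ℕ) : Fin (n+1)) := by
    apply Fin.ext
    rw [S15.natCast_val]
  rw [hm0]
  have hUS : uniSegProb (n+1) Λ lam ℓ ((lam:ℕ):Fin (n+1))
      = S15.Pq Λ lam ℓ ((lam:ℕ):Fin (n+1)) / (((n+1:ℕ)):ℚ) := rfl
  have hUC : uniClgExp (n+1) Λ lam ℓ = S15.Gq (n := n) Λ lam ℓ / (((n+1:ℕ)):ℚ) := rfl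
  obtain ⟨hlow, hupp⟩ := S15.main_bounds hN' hΛ hη hlam1 hℓ
  set P := S15.Pq Λ lam ℓ ((lam:ℕ):Fin (n+1)) with hP
  set G := S15.Gq (n := n) Λ lam ℓ with hG
  have hNq : ((n:ℚ)+1) = (η:ℚ) * (Λ:ℚ) := by exact_mod_cast hN'
  have hNqpos : (0:ℚ) < (n:ℚ)+1 := by positivity
  have hΛq : (0:ℚ) < (Λ:ℚ) := by exact_mod_cast hΛ
  rw [hUS, hUC]
  have hcast : (((n+1:ℕ)):ℚ) = (n:ℚ)+1 := by push_cast; ring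
  rw [hcast]
  constructor
  · have key : ((n:ℚ)+1)^2 - G ≤ 2*P*((n:ℚ)+1) := by
      have h1 := (div_le_iff₀ hΛq).mp hlow
      calc ((n:ℚ)+1)^2 - G ≤ 2*((η:ℚ)*P)*Λ := h1
        _ = 2*P*((η:ℚ)*Λ) := by ring
        _ = 2*P*((n:ℚ)+1) := by rw [← hNq]
    rw [show (1:ℚ)/2 - G/((n:ℚ)+1)/(2*((n:ℚ)+1)) = (((n:ℚ)+1)^2 - G)/(2*((n:ℚ)+1)^2) from by
      field_simp]
    rw [div_le_div_iff₀ (by positivity) hNqpos]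
    nlinarith [mul_le_mul_of_nonneg_right key hNqpos.le]
  · have hee : (((n:ℚ)+1) - η)*Λ = ((n:ℚ)+1)*((Λ:ℚ)-1) := by
      have h := hNq.symm
      linear_combination -h
    have key : 2*P*((n:ℚ)+1) ≤ ((n:ℚ)+1)^2 - G + ((n:ℚ)+1)*((Λ:ℚ)-1) := by
      have h2 := mul_le_mul_of_nonneg_right hupp hΛq.le
      calc 2*P*((n:ℚ)+1) = 2*((η:ℚ)*P)*Λ := by rw [hNq]; ring
        _ ≤ ((((n:ℚ)+1)^2 - G)/Λ + (((n:ℚ)+1) - (η:ℚ)))*Λ := h2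
        _ = ((n:ℚ)+1)^2 - G + (((n:ℚ)+1) - (η:ℚ))*Λ := by field_simp
        _ = ((n:ℚ)+1)^2 - G + ((n:ℚ)+1)*((Λ:ℚ)-1) := by rw [hee]
    rw [show (1:ℚ)/2 - G/((n:ℚ)+1)/(2*((n:ℚ)+1)) + ((Λ:ℚ)-1)/(2*((n:ℚ)+1))
        = (((n:ℚ)+1)^2 - G + ((n:ℚ)+1)*((Λ:ℚ)-1))/(2*((n:ℚ)+1)^2) from by
      field_simp]
    rw [div_le_div_iff₀ hNqpos (by positivity)]
    nlinarith [mul_le_mul_of_nonneg_right key hNqpos.le]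

end
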